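/- arXiv:2105.06531 — 2 statements merged into one kernel-verified Lean document; each statement's English description precedes it below -/
import Mathlib

section
/- For a single column D_1 ⊆ [n] viewed as a one-column diagram, the number of subsets C_1 ⊆ [n] with C_1 ≤ D_1 is at least rank((D_1)) + 1, where rank((D_1)) = Σ_{i ∈ D_1} #{k ≤ i : k ∉ D_1}. -/
/-!
Every pair `(i, k)` counted by `colRank D` (`i ∈ D`, `k ∉ D`, `1 ≤ k ≤ i`) gives the column
`D - {i} + {k}` inside `[n]`. Moving one entry down never raises the `j`-th smallest entry,
as is seen most easily through the criterion: `C ≤ D` as soon as `|C| = |D|` and, for every `x`,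
`C` has at least as many entries `≤ x` as `D`. Distinct pairs give distinct columns, all different
from `D` itself, so together with `D` they are `colRank D + 1` columns `C ≤ D`.
-/

open Finset

/-- `colLE R S`: `R ≤ S` for columns, i.e. `|R| = |S|` and the `k`-th least element of `R`
does not exceed the `k`-th least element of `S` for each `k`. -/
def colLE {α : Type*} [LinearOrder α] (R S : Finset α) : Prop :=
  R.card = S.card ∧
  ∀ (k : ℕ) (hR : k < (R.sort (· ≤ ·)).length) (hS : k < (S.sort (· ≤ ·)).length),
    (R.sort (· ≤ ·)).get ⟨k, hR⟩ ≤ (S.sort (· ≤ ·)).get ⟨k, hS⟩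

/-- Rank of a single column `S ⊆ [n] = {1,…,n}`:
`Σ_{i ∈ S} #{k : 1 ≤ k ≤ i, k ∉ S}`. -/
def colRank (S : Finset ℕ) : ℕ :=
  ∑ i ∈ S, ((Finset.Icc 1 i).filter (fun k => k ∉ S)).card

theorem Finset.injOn_insert_erase {α : Type*} [DecidableEq α] (D : Finset α) :
    Set.InjOn (fun p : Σ _ : α, α => insert p.2 (D.erase p.1)) {p | p.1 ∈ D ∧ p.2 ∉ D} := by
  rintro ⟨a, b⟩ ⟨ha, hb⟩ ⟨a', b'⟩ - h
  simp only at h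
  have hbb' : b = b' := by
    have hb_mem : b ∈ insert b' (D.erase a') := h ▸ mem_insert_self b _
    exact (mem_insert.1 hb_mem).resolve_right fun hb_er => hb (mem_of_mem_erase hb_er)
  have haa' : a = a' := by
    by_contra hne
    have ha_mem : a ∈ insert b (D.erase a) := h ▸ mem_insert_of_mem (mem_erase.2 ⟨hne, ha⟩)
    rcases mem_insert.1 ha_mem with rfl | ha_er
    · exact hb ha
    · exact (notMem_erase a D) ha_er
  subst hbb' haa'
  rfl

section LinearOrder

variable {α : Type*} [LinearOrder α]

theorem Finset.orderEmbOfFin_le_iff_lt_card_filter (C : Finset α) {m : ℕ} (h : #C = m)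
    (k : Fin m) (x : α) : C.orderEmbOfFin h k ≤ x ↔ (k : ℕ) < #{c ∈ C | c ≤ x} := by
  set e := C.orderEmbOfFin h
  constructor
  · intro hkx
    have hsub : (Iic k).map e.toEmbedding ⊆ {c ∈ C | c ≤ x} := by
      simp only [subset_iff, mem_map, mem_Iic, mem_filter]
      rintro _ ⟨j, hjk, rfl⟩
      exact ⟨orderEmbOfFin_mem C h j, (e.monotone hjk).trans hkx⟩
    simpa using card_le_card hsub
  · intro hk
    by_contra! hxk
    have hsub : {c ∈ C | c ≤ x} ⊆ (Iio k).map e.toEmbedding := by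
      intro c hc
      rw [mem_filter, ← mem_coe, ← range_orderEmbOfFin C h] at hc
      obtain ⟨⟨j, rfl⟩, hjx⟩ := hc
      exact mem_map_of_mem _ (mem_Iio.2 (e.strictMono.lt_iff_lt.1 (hjx.trans_lt hxk)))
    simpa using hk.trans_le (card_le_card hsub)

theorem colLE_of_card_filter_le {C S : Finset α} (hcard : #C = #S)
    (hcount : ∀ x, #{s ∈ S | s ≤ x} ≤ #{c ∈ C | c ≤ x}) : colLE C S := by
  refine ⟨hcard, fun k _ hS => ?_⟩
  have hk : k < #S := by simpa using hS
  change C.orderEmbOfFin hcard ⟨k, hk⟩ ≤ S.orderEmbOfFin rfl ⟨k, hk⟩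
  rw [orderEmbOfFin_le_iff_lt_card_filter]
  exact ((orderEmbOfFin_le_iff_lt_card_filter S rfl _ _).1 le_rfl).trans_le (hcount _)

theorem colLE_refl (S : Finset α) : colLE S S := ⟨rfl, fun _ _ _ => le_rfl⟩

theorem colLE_insert_erase {D : Finset α} {a b : α} (ha : a ∈ D) (hb : b ∉ D) (hba : b ≤ a) :
    colLE (insert b (D.erase a)) D := by
  refine colLE_of_card_filter_le ?_ fun x => ?_
  · rw [card_insert_of_notMem fun h => hb (mem_of_mem_erase h), card_erase_add_one ha]
  rw [filter_insert, filter_erase]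
  split_ifs with hbx
  · rw [card_insert_of_notMem fun h => hb (mem_filter.1 (mem_of_mem_erase h)).1]
    have := pred_card_le_card_erase (s := {s ∈ D | s ≤ x}) (a := a)
    omega
  · have hax : ¬ a ≤ x := fun hax => hbx (hba.trans hax)
    rw [erase_eq_of_notMem (s := {s ∈ D | s ≤ x}) fun h => hax (mem_filter.1 h).2]

end LinearOrder

def colRankPairs (S : Finset ℕ) : Finset (Σ _ : ℕ, ℕ) :=
  S.sigma fun i => (Icc 1 i).filter fun k => k ∉ S

theorem card_colRankPairs (S : Finset ℕ) : #(colRankPairs S) = colRank S :=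
  card_sigma _ _

theorem mem_colRankPairs {S : Finset ℕ} {p : Σ _ : ℕ, ℕ} :
    p ∈ colRankPairs S ↔ p.1 ∈ S ∧ p.2 ∉ S ∧ 1 ≤ p.2 ∧ p.2 ≤ p.1 := by
  simp only [colRankPairs, mem_sigma, mem_filter, mem_Icc]
  tauto

/-- For a single column `D₁ ⊆ [n]`, the number of columns `C₁ ≤ D₁`
is at least `rank((D₁)) + 1`. -/
theorem stmt_8 (n : ℕ) (D1 : Finset ℕ) (hsub : D1 ⊆ Finset.Icc 1 n) :
    Set.ncard {C : Finset ℕ | C ⊆ Finset.Icc 1 n ∧ colLE C D1}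
      ≥ colRank D1 + 1 := by
  set swap : (Σ _ : ℕ, ℕ) → Finset ℕ := fun p => insert p.2 (D1.erase p.1)
  set F := insert D1 ((colRankPairs D1).image swap)
  have hinj : Set.InjOn swap (colRankPairs D1) :=
    (injOn_insert_erase D1).mono fun p hp => (mem_colRankPairs.1 hp).imp_right And.left
  have hD1 : D1 ∉ (colRankPairs D1).image swap := by
    simp only [mem_image, not_exists, not_and]
    intro p hp hswap
    exact (mem_colRankPairs.1 hp).2.1 (hswap ▸ mem_insert_self _ _)
  have hF : ↑F ⊆ {C : Finset ℕ | C ⊆ Finset.Icc 1 n ∧ colLE C D1} := by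
    simp only [F, coe_insert, coe_image, Set.insert_subset_iff, Set.image_subset_iff]
    refine ⟨⟨hsub, colLE_refl D1⟩, fun p hp => ?_⟩
    obtain ⟨hi, hk, hk1, hki⟩ := mem_colRankPairs.1 hp
    refine ⟨insert_subset_iff.2 ⟨?_, (erase_subset _ _).trans hsub⟩, colLE_insert_erase hi hk hki⟩
    exact mem_Icc.2 ⟨hk1, hki.trans (mem_Icc.1 (hsub hi)).2⟩
  have hfin : {C : Finset ℕ | C ⊆ Finset.Icc 1 n ∧ colLE C D1}.Finite :=
    (Icc 1 n).powerset.finite_toSet.subset fun C hC => mem_coe.2 (mem_powerset.2 hC.1)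
  calc colRank D1 + 1 = #F := by
        rw [card_insert_of_notMem hD1, card_image_of_injOn hinj, card_colRankPairs]
    _ ≤ _ := by
        rw [← Set.ncard_coe_finset]
        exact Set.ncard_le_ncard hF hfin
end

section
/- Let S = {a_1 < ... < a_m} ⊆ [n] with rank((S)) > 0, let k be the largest integer less than a_m with k ∉ S, and let i be such that a_i = k + 1. Then C = (S \ {a_i}) ∪ {k} satisfies C ≤ S, C ≠ S, and rank((C)) = rank((S)) − 1. -/
open Finset

/-!
`C` is the image of `S` under the transposition `σ = (k k+1)`. Since `k ∉ S`, `σ` is strictly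
monotone on `S` and only moves `k + 1` down to `k`, so sorting `C` is sorting `S` and then
applying `σ`, which gives `C ≤ S`.

In `colRank`, the term of `i ∈ S` counts the gaps of `S` in `[1, i]`. For `i ≠ k + 1` the interval
`[1, i]` is `σ`-stable, so the gaps of `C` in it are the images of those of `S`; the term of
`k + 1` becomes the term of `k` for `C`, which has lost exactly the gap `k`. This needs `k ≥ 1`,
which holds because a positive rank gives a gap `t ≥ 1` below `max S`, and `t ≤ k`.
-/

theorem colLE_map_of_strictMonoOn {α : Type*} [LinearOrder α] {S : Finset α} {f : α ↪ α}
    (hf : StrictMonoOn f S) (hle : ∀ x ∈ S, f x ≤ x) : colLE (S.map f) S := by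
  refine ⟨card_map f, fun j hR hS => ?_⟩
  simp only [← hf.map_finsetSort, List.get_eq_getElem, List.getElem_map]
  exact hle _ ((mem_sort _).1 (List.getElem_mem _))

theorem Finset.map_swap_eq_insert_erase {α : Type*} [DecidableEq α] {S : Finset α} {a b : α}
    (ha : a ∉ S) (hb : b ∈ S) :
    S.map (Equiv.swap a b).toEmbedding = insert a (S.erase b) := by
  ext t
  rw [mem_map_equiv, Equiv.symm_swap, mem_insert, mem_erase, Equiv.swap_apply_def]
  split_ifs <;> subst_vars <;> grind

theorem Finset.card_filter_notMem_map_equiv {α : Type*} [DecidableEq α] {I : Finset α}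
    (σ : α ≃ α) (hI : I.map σ.toEmbedding = I) (S : Finset α) :
    #(I.filter (· ∉ S.map σ.toEmbedding)) = #(I.filter (· ∉ S)) := by
  conv_lhs => rw [← hI, filter_map, card_map]
  simp

theorem strictMonoOn_swap_succ {s : Set ℕ} {k : ℕ} (hk : k ∉ s) :
    StrictMonoOn (Equiv.swap k (k + 1)) s := by
  intro a ha b hb hab
  have : a ≠ k := fun h => hk (h ▸ ha)
  have : b ≠ k := fun h => hk (h ▸ hb)
  simp only [Equiv.swap_apply_def]
  split_ifs <;> omega

theorem swap_succ_le_self {k x : ℕ} (hx : x ≠ k) : Equiv.swap k (k + 1) x ≤ x := by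
  rw [Equiv.swap_apply_def]
  split_ifs <;> omega

theorem map_swap_succ_Icc_one {k i : ℕ} (hk : 1 ≤ k) (hi : i ≠ k) :
    (Icc 1 i).map (Equiv.swap k (k + 1)).toEmbedding = Icc 1 i := by
  ext t
  rw [mem_map_equiv, Equiv.symm_swap, mem_Icc, mem_Icc, Equiv.swap_apply_def]
  split_ifs <;> omega

theorem colRank_map_swap_succ_add_one {S : Finset ℕ} {k : ℕ} (hk : 1 ≤ k) (hkS : k ∉ S)
    (hk1S : k + 1 ∈ S) :
    colRank (S.map (Equiv.swap k (k + 1)).toEmbedding) + 1 = colRank S := by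
  set σ := Equiv.swap k (k + 1)
  set C := S.map σ.toEmbedding
  have hfixed : ∀ i ∈ S.erase (k + 1),
      #((Icc 1 (σ i)).filter (· ∉ C)) = #((Icc 1 i).filter (· ∉ S)) := by
    intro i hi
    have hik : i ≠ k := fun h => hkS (h ▸ mem_of_mem_erase hi)
    rw [Equiv.swap_apply_of_ne_of_ne hik (ne_of_mem_erase hi)]
    exact card_filter_notMem_map_equiv σ (map_swap_succ_Icc_one hk hik) S
  have hmoved : (Icc 1 (k + 1)).filter (· ∉ S) = insert k ((Icc 1 k).filter (· ∉ C)) := by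
    ext t
    simp only [C, mem_insert, mem_filter, mem_Icc, mem_map_equiv, σ, Equiv.symm_swap,
      Equiv.swap_apply_def]
    split_ifs <;> grind
  have hkC : k ∉ (Icc 1 k).filter (· ∉ C) := by simp [C, σ, hk1S]
  rw [colRank, colRank, sum_map, ← add_sum_erase S _ hk1S, ← add_sum_erase S _ hk1S]
  simp only [Equiv.coe_toEmbedding, sum_congr rfl hfixed]
  rw [Equiv.swap_apply_right, hmoved, card_insert_of_notMem hkC]
  ring

theorem exists_notMem_lt_max'_of_colRank_pos {S : Finset ℕ} (hne : S.Nonempty)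
    (hr : 0 < colRank S) : ∃ t, 1 ≤ t ∧ t < S.max' hne ∧ t ∉ S := by
  obtain ⟨i, hi, hpos⟩ := exists_ne_zero_of_sum_ne_zero hr.ne'
  obtain ⟨t, ht⟩ := card_ne_zero.1 hpos
  rw [mem_filter, mem_Icc] at ht
  have hti : t ≠ i := fun h => ht.2 (h ▸ hi)
  exact ⟨t, ht.1.1, (lt_of_le_of_ne ht.1.2 hti).trans_le (S.le_max' i hi), ht.2⟩

theorem stmt_18_general (S : Finset ℕ)
    (hne : S.Nonempty) (hr : 0 < colRank S) (k : ℕ)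
    (hk2 : k ∉ S)
    (hk3 : ∀ k', k' < S.max' hne → k' ∉ S → k' ≤ k)
    (hk4 : k + 1 ∈ S) :
    colLE (insert k (S.erase (k + 1))) S ∧
    insert k (S.erase (k + 1)) ≠ S ∧
    colRank (insert k (S.erase (k + 1))) = colRank S - 1 := by
  obtain ⟨t, ht1, htmax, htS⟩ := exists_notMem_lt_max'_of_colRank_pos hne hr
  have hk : 1 ≤ k := ht1.trans (hk3 t htmax htS)
  have hrank := colRank_map_swap_succ_add_one hk hk2 hk4
  rw [← map_swap_eq_insert_erase hk2 hk4]
  refine ⟨colLE_map_of_strictMonoOn (strictMonoOn_swap_succ hk2)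
    (fun x hx => swap_succ_le_self (ne_of_mem_of_not_mem hx hk2)), fun h => hk2 ?_, by omega⟩
  rw [← h, mem_map_equiv, Equiv.symm_swap, Equiv.swap_apply_left]
  exact hk4

/-- Let `S = {a₁ < ⋯ < a_m}` with `rank((S)) > 0`, let `k` be the largest integer
less than `a_m` with `k ∉ S`, so that `k + 1 ∈ S`. Then `C = (S \ {k+1}) ∪ {k}`
satisfies `C ≤ S`, `C ≠ S`, and `rank((C)) = rank((S)) − 1`. -/
theorem stmt_18 (n : ℕ) (S : Finset ℕ) (hsub : S ⊆ Finset.Icc 1 n)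
    (hne : S.Nonempty) (hr : 0 < colRank S) (k : ℕ)
    (hk1 : k < S.max' hne) (hk2 : k ∉ S)
    (hk3 : ∀ k', k' < S.max' hne → k' ∉ S → k' ≤ k)
    (hk4 : k + 1 ∈ S) :
    colLE (insert k (S.erase (k + 1))) S ∧
    insert k (S.erase (k + 1)) ≠ S ∧
    colRank (insert k (S.erase (k + 1))) = colRank S - 1 :=
  stmt_18_general S hne hr k hk2 hk3 hk4
end
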